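/- arXiv:1901.01598 — 6 statements merged into one kernel-verified Lean document; each statement's English description precedes it below -/
import Mathlib

section
/- Suppose the learning rate is delayed: f(l) = 0 for all l < L*, where L* ≥ 1 is an integer. Let w'(·,·) denote the winning probability defined exactly as w but with the shifted learning rate l ↦ f(l + L*). Then for all integers k* with L* + 1 ≤ k* ≤ k and all T ≥ 0: w(k,T) ≤ (1 - u(k*, L*)) + w'(k - k*, T). -/
/-!
Until the defender's level reaches `L*` nothing is learned, so the game moves like the jump chain
with steps `x` (progress), `y` (progress and level) and `z` (level), slowed down by a holding
probability. Let `φ(b, n)` be the probability that this chain makes `n` level steps before `b`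
progress steps. Then `1 - φ + w'(k - k*, ·)` dominates `W` on the states with progress at most
`k* + 1` and level at most `L*`: on the boundary because a game that reaches level `L*` with
progress at most `k*` is dominated by the shifted game that needs only `k - k*` more progress, and
inside because `φ` is harmonic for the chain and `w'` is nondecreasing in time.
-/

open Finset

structure IsStochastic (m1 m2 m3 m4 : ℕ → ℝ) : Prop where
  nonneg₁ : ∀ l, 0 ≤ m1 l
  nonneg₂ : ∀ l, 0 ≤ m2 l
  nonneg₃ : ∀ l, 0 ≤ m3 l
  nonneg₄ : ∀ l, 0 ≤ m4 l
  sum_eq_one : ∀ l, m1 l + m2 l + m3 l + m4 l = 1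

namespace IsStochastic

variable {m1 m2 m3 m4 : ℕ → ℝ}

theorem comp_add_right (hm : IsStochastic m1 m2 m3 m4) (L : ℕ) :
    IsStochastic (fun l => m1 (l + L)) (fun l => m2 (l + L)) (fun l => m3 (l + L))
      (fun l => m4 (l + L)) :=
  ⟨fun _ => hm.nonneg₁ _, fun _ => hm.nonneg₂ _, fun _ => hm.nonneg₃ _, fun _ => hm.nonneg₄ _,
    fun _ => hm.sum_eq_one _⟩

theorem mix_le_mix (hm : IsStochastic m1 m2 m3 m4) (l : ℕ) {a b c d a' b' c' d' : ℝ}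
    (ha : a ≤ a') (hb : b ≤ b') (hc : c ≤ c') (hd : d ≤ d') :
    m1 l * a + m2 l * b + m3 l * c + m4 l * d ≤ m1 l * a' + m2 l * b' + m3 l * c' + m4 l * d' := by
  have := hm.nonneg₁ l
  have := hm.nonneg₂ l
  have := hm.nonneg₃ l
  have := hm.nonneg₄ l
  gcongr

end IsStochastic

theorem isStochastic_of_learningRate {p h γ : ℝ} (hp : 0 ≤ p) (hh : 0 ≤ h) (hph : p + h ≤ 1)
    (hγ0 : 0 ≤ γ) (hγ1 : γ ≤ 1) {f : ℕ → ℝ} (hf0 : ∀ l, 0 ≤ f l) (hf1 : ∀ l, f l ≤ 1)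
    {m1 m2 m3 m4 : ℕ → ℝ}
    (hm1 : ∀ l, m1 l = f l * (1 - γ) + (1 - f l) * (1 - γ) * (1 - p - h))
    (hm2 : ∀ l, m2 l = (1 - f l) * (1 - γ) * p)
    (hm3 : ∀ l, m3 l = (1 - f l) * γ * p)
    (hm4 : ∀ l, m4 l = (1 - f l) * (1 - γ) * h + f l * γ + (1 - f l) * γ * (1 - p)) :
    IsStochastic m1 m2 m3 m4 := by
  have hf : ∀ l, 0 ≤ 1 - f l := fun l => sub_nonneg.2 (hf1 l)
  have hγ : 0 ≤ 1 - γ := sub_nonneg.2 hγ1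
  have hph' : 0 ≤ 1 - p - h := by linarith
  have hp' : 0 ≤ 1 - p := by linarith
  refine ⟨fun l => ?_, fun l => ?_, fun l => ?_, fun l => ?_, fun l => ?_⟩
  · rw [hm1]
    exact add_nonneg (mul_nonneg (hf0 l) hγ) (mul_nonneg (mul_nonneg (hf l) hγ) hph')
  · rw [hm2]
    exact mul_nonneg (mul_nonneg (hf l) hγ) hp
  · rw [hm3]
    exact mul_nonneg (mul_nonneg (hf l) hγ0) hp
  · rw [hm4]
    exact add_nonneg (add_nonneg (mul_nonneg (mul_nonneg (hf l) hγ) hh) (mul_nonneg (hf0 l) hγ0))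
      (mul_nonneg (mul_nonneg (hf l) hγ0) hp')
  · rw [hm1, hm2, hm3, hm4]
    ring

/-- The probability that the jump chain with steps `x` (progress), `y` (progress and level) and
`z` (level) makes `n` level steps before `b` progress steps; `levelFirstProb x y z (k + 1) L` is
the paper's `u(k, L)`. -/
def levelFirstProb (x y z : ℝ) : ℕ → ℕ → ℝ
  | 0, _ => 0
  | _ + 1, 0 => 1
  | b + 1, n + 1 =>
    x * levelFirstProb x y z b (n + 1) + y * levelFirstProb x y z b n
      + z * levelFirstProb x y z (b + 1) n

theorem levelFirstProb_le_one {x y z : ℝ} (hx : 0 ≤ x) (hy : 0 ≤ y) (hz : 0 ≤ z)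
    (hxyz : x + y + z = 1) : ∀ b n, levelFirstProb x y z b n ≤ 1
  | 0, _ => by simp [levelFirstProb]
  | _ + 1, 0 => by simp [levelFirstProb]
  | b + 1, n + 1 => by
    rw [levelFirstProb, ← hxyz]
    have h₁ := levelFirstProb_le_one hx hy hz hxyz b (n + 1)
    have h₂ := levelFirstProb_le_one hx hy hz hxyz b n
    have h₃ := levelFirstProb_le_one hx hy hz hxyz (b + 1) n
    calc _ ≤ x * 1 + y * 1 + z * 1 := by gcongr
      _ = x + y + z := by ring

structure IsVisitProb (x y z : ℝ) (q : ℕ → ℕ → ℝ) : Prop where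
  zero_zero : q 0 0 = 1
  succ_zero : ∀ n, q (n + 1) 0 = x * q n 0
  zero_succ : ∀ m, q 0 (m + 1) = z * q 0 m
  succ_succ : ∀ n m, q (n + 1) (m + 1) = x * q n (m + 1) + y * q n m + z * q (n + 1) m

namespace IsVisitProb

variable {x y z : ℝ} {q : ℕ → ℕ → ℝ}

theorem eq_pow (hq : IsVisitProb x y z q) (n : ℕ) : q n 0 = x ^ n := by
  induction n with
  | zero => rw [hq.zero_zero, pow_zero]
  | succ n ih => rw [hq.succ_zero, ih, pow_succ']

theorem sum_range_succ_succ (hq : IsVisitProb x y z q) (b m : ℕ) :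
    ∑ n ∈ range (b + 1), q n (m + 1) =
      x * ∑ n ∈ range b, q n (m + 1) + y * ∑ n ∈ range b, q n m
        + z * ∑ n ∈ range (b + 1), q n m := by
  rw [sum_range_succ' (fun n => q n (m + 1)), sum_range_succ' (fun n => q n m), hq.zero_succ]
  simp only [hq.succ_succ, sum_add_distrib, ← mul_sum]
  ring

/-- The chain makes its last level step from some state `(i, n)` with `i ≤ b`: by a `z`-step, or
also by a `y`-step if `i < b`. -/
theorem levelFirstProb_eq (hq : IsVisitProb x y z q) (n b : ℕ) :
    levelFirstProb x y z (b + 1) (n + 1) = (∑ i ∈ range b, q i n) * (y + z) + q b n * z := by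
  induction n generalizing b with
  | zero =>
    induction b with
    | zero => simp [levelFirstProb, hq.zero_zero]
    | succ b ih =>
      have hgeom := geom_sum_mul x b
      rw [levelFirstProb, ih, levelFirstProb, levelFirstProb, sum_range_succ]
      simp only [hq.eq_pow] at hgeom ⊢
      linear_combination (y + z) * hgeom
  | succ n ihn =>
    induction b with
    | zero =>
      rw [levelFirstProb, ihn]
      simp only [levelFirstProb, sum_range_zero, mul_zero, zero_add, hq.zero_succ]
      ring
    | succ b ihb =>
      rw [levelFirstProb, ihb, ihn, ihn, hq.succ_succ, hq.sum_range_succ_succ]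
      ring

end IsVisitProb

structure IsWinProb (m1 m2 m3 m4 : ℕ → ℝ) (k : ℕ) (W : ℕ → ℕ → ℕ → ℝ) : Prop where
  win : ∀ i l t, k ≤ i → W i l t = 1
  zero : ∀ i l, i < k → W i l 0 = 0
  step : ∀ i l t, i < k → W i l (t + 1) =
    m1 l * W i l t + m2 l * W (i + 1) l t + m3 l * W (i + 1) (l + 1) t + m4 l * W i (l + 1) t

namespace IsWinProb

variable {m1 m2 m3 m4 : ℕ → ℝ} {k : ℕ} {W : ℕ → ℕ → ℕ → ℝ}

theorem nonneg (hW : IsWinProb m1 m2 m3 m4 k W) (hm : IsStochastic m1 m2 m3 m4) (i l t : ℕ) :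
    0 ≤ W i l t := by
  induction t generalizing i l with
  | zero =>
    rcases lt_or_ge i k with hi | hi
    · rw [hW.zero i l hi]
    · rw [hW.win i l 0 hi]
      exact zero_le_one
  | succ t ih =>
    rcases lt_or_ge i k with hi | hi
    · rw [hW.step i l t hi]
      simpa using hm.mix_le_mix l (ih i l) (ih (i + 1) l) (ih (i + 1) (l + 1)) (ih i (l + 1))
    · rw [hW.win i l _ hi]
      exact zero_le_one

theorem le_one (hW : IsWinProb m1 m2 m3 m4 k W) (hm : IsStochastic m1 m2 m3 m4) (i l t : ℕ) :
    W i l t ≤ 1 := by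
  induction t generalizing i l with
  | zero =>
    rcases lt_or_ge i k with hi | hi
    · rw [hW.zero i l hi]
      exact zero_le_one
    · rw [hW.win i l 0 hi]
  | succ t ih =>
    rcases lt_or_ge i k with hi | hi
    · rw [hW.step i l t hi]
      refine (hm.mix_le_mix l (ih i l) (ih (i + 1) l) (ih (i + 1) (l + 1)) (ih i (l + 1))).trans_eq ?_
      simpa using hm.sum_eq_one l
    · rw [hW.win i l _ hi]

theorem monotone (hW : IsWinProb m1 m2 m3 m4 k W) (hm : IsStochastic m1 m2 m3 m4) (i l : ℕ) :
    Monotone (W i l) := by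
  refine monotone_nat_of_le_succ fun t => ?_
  induction t generalizing i l with
  | zero =>
    rcases lt_or_ge i k with hi | hi
    · rw [hW.zero i l hi]
      exact hW.nonneg hm i l 1
    · rw [hW.win i l 0 hi, hW.win i l 1 hi]
  | succ t ih =>
    rcases lt_or_ge i k with hi | hi
    · rw [hW.step i l t hi, hW.step i l (t + 1) hi]
      exact hm.mix_le_mix l (ih i l) (ih (i + 1) l) (ih (i + 1) (l + 1)) (ih i (l + 1))
    · rw [hW.win i l _ hi, hW.win i l _ hi]

/-- The condition `i + k' ≤ c + k` says `k - i ≥ k' - c`: the first game needs at least as much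
further progress. -/
theorem le_of_shift (hW : IsWinProb m1 m2 m3 m4 k W) (hm : IsStochastic m1 m2 m3 m4) {L k' : ℕ}
    {V : ℕ → ℕ → ℕ → ℝ}
    (hV : IsWinProb (fun l => m1 (l + L)) (fun l => m2 (l + L)) (fun l => m3 (l + L))
      (fun l => m4 (l + L)) k' V) (t : ℕ) :
    ∀ i c l, i + k' ≤ c + k → W i (l + L) t ≤ V c l t := by
  induction t with
  | zero =>
    intro i c l hic
    rcases lt_or_ge i k with hi | hi
    · rw [hW.zero i _ hi]
      exact hV.nonneg (hm.comp_add_right L) c l 0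
    · rw [hV.win c l 0 (by omega)]
      exact hW.le_one hm i _ 0
  | succ t ih =>
    intro i c l hic
    rcases lt_or_ge c k' with hc | hc
    · have hi : i < k := by omega
      have hl : l + 1 + L = l + L + 1 := Nat.add_right_comm l 1 L
      rw [hW.step i _ t hi, hV.step c l t hc]
      refine hm.mix_le_mix _ (ih i c l hic) (ih (i + 1) (c + 1) l (by omega)) ?_ ?_
      · simpa only [hl] using ih (i + 1) (c + 1) (l + 1) (by omega)
      · simpa only [hl] using ih i c (l + 1) hic
    · rw [hV.win c l _ hc]
      exact hW.le_one hm i _ _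

theorem le_one_sub_levelFirstProb_add_of_boundary (hW : IsWinProb m1 m2 m3 m4 k W)
    (hm : IsStochastic m1 m2 m3 m4) {x y z : ℝ} (hx : 0 ≤ x) (hy : 0 ≤ y) (hz : 0 ≤ z)
    (hxyz : x + y + z = 1) {K L : ℕ} {B : ℕ → ℝ} (hWB : ∀ i t, i ≤ K → W i L t ≤ B t)
    {t i b l n : ℕ} (hib : i + b = K + 1) (hln : l + n = L) (hbd : b = 0 ∨ n = 0 ∨ k ≤ i) :
    W i l t ≤ 1 - levelFirstProb x y z b n + B t := by
  rcases Nat.eq_zero_or_pos b with rfl | hb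
  · simp only [levelFirstProb]
    linarith [hW.le_one hm i l t, hW.nonneg hm 0 L t, hWB 0 t K.zero_le]
  · have hWL : W i l t ≤ W i L t := by
      rcases hbd with hb0 | rfl | hi
      · omega
      · rw [← hln, add_zero]
      · rw [hW.win i l t hi, hW.win i L t hi]
    linarith [hWB i t (by omega), levelFirstProb_le_one hx hy hz hxyz b n]

theorem le_one_sub_levelFirstProb_add (hW : IsWinProb m1 m2 m3 m4 k W)
    (hm : IsStochastic m1 m2 m3 m4) {s x y z : ℝ} (hx : 0 ≤ x) (hy : 0 ≤ y) (hz : 0 ≤ z)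
    (hxyz : x + y + z = 1) {K L : ℕ}
    (hpre : ∀ l < L, m1 l = 1 - s ∧ m2 l = s * x ∧ m3 l = s * y ∧ m4 l = s * z)
    {B : ℕ → ℝ} (hB : Monotone B) (hWB : ∀ i t, i ≤ K → W i L t ≤ B t) (t : ℕ) :
    ∀ i b l n, i + b = K + 1 → l + n = L → W i l t ≤ 1 - levelFirstProb x y z b n + B t := by
  have boundary {t i b l n : ℕ} := hW.le_one_sub_levelFirstProb_add_of_boundary (t := t) (i := i)
    (b := b) (l := l) (n := n) hm hx hy hz hxyz hWB
  induction t with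
  | zero =>
    intro i b l n hib hln
    rcases lt_or_ge i k with hi | hi
    · rw [hW.zero i l hi]
      linarith [levelFirstProb_le_one hx hy hz hxyz b n, hW.nonneg hm 0 L 0, hWB 0 0 K.zero_le]
    · exact boundary hib hln (Or.inr (Or.inr hi))
  | succ t ih =>
    intro i b l n hib hln
    rcases b with _ | b
    · exact boundary hib hln (Or.inl rfl)
    rcases n with _ | n
    · exact boundary hib hln (Or.inr (Or.inl rfl))
    rcases lt_or_ge i k with hi | hi
    swap
    · exact boundary hib hln (Or.inr (Or.inr hi))
    obtain ⟨h₁, h₂, h₃, h₄⟩ := hpre l (by omega)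
    have hrec : levelFirstProb x y z (b + 1) (n + 1) = x * levelFirstProb x y z b (n + 1)
        + y * levelFirstProb x y z b n + z * levelFirstProb x y z (b + 1) n := by
      rw [levelFirstProb]
    calc W i l (t + 1)
        = m1 l * W i l t + m2 l * W (i + 1) l t + m3 l * W (i + 1) (l + 1) t
          + m4 l * W i (l + 1) t := hW.step i l t hi
      _ ≤ m1 l * (1 - levelFirstProb x y z (b + 1) (n + 1) + B t)
          + m2 l * (1 - levelFirstProb x y z b (n + 1) + B t)
          + m3 l * (1 - levelFirstProb x y z b n + B t)
          + m4 l * (1 - levelFirstProb x y z (b + 1) n + B t) :=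
        hm.mix_le_mix l (ih i (b + 1) l (n + 1) hib hln) (ih (i + 1) b l (n + 1) (by omega) hln)
          (ih (i + 1) b (l + 1) n (by omega) (by omega)) (ih i (b + 1) (l + 1) n hib (by omega))
      _ = 1 - levelFirstProb x y z (b + 1) (n + 1) + B t := by
        rw [h₁, h₂, h₃, h₄]
        linear_combination s * (1 + B t) * hxyz + s * hrec
      _ ≤ 1 - levelFirstProb x y z (b + 1) (n + 1) + B (t + 1) := by
        gcongr
        exact hB t.le_succ

end IsWinProb

theorem delayed_learning_decomposition_general
    (p h γ : ℝ) (hp : 0 < p) (hh : 0 ≤ h) (hph : p + h ≤ 1)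
    (hγ0 : 0 < γ) (hγ1 : γ < 1)
    (f : ℕ → ℝ) (hf0 : ∀ l, 0 ≤ f l) (hf1 : ∀ l, f l ≤ 1)
    (m1 m2 m3 m4 : ℕ → ℝ)
    (hm1 : ∀ l, m1 l = f l * (1 - γ) + (1 - f l) * (1 - γ) * (1 - p - h))
    (hm2 : ∀ l, m2 l = (1 - f l) * (1 - γ) * p)
    (hm3 : ∀ l, m3 l = (1 - f l) * γ * p)
    (hm4 : ∀ l, m4 l = (1 - f l) * (1 - γ) * h + f l * γ + (1 - f l) * γ * (1 - p))
    (Lstar : ℕ) (hLstar : 1 ≤ Lstar)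
    (hdelay : ∀ l, l < Lstar → f l = 0)
    (k : ℕ)
    (W : ℕ → ℕ → ℕ → ℝ)
    (hWwin : ∀ i l t, k ≤ i → W i l t = 1)
    (hWzero : ∀ i l, i < k → W i l 0 = 0)
    (hWrec : ∀ i l t, i < k →
      W i l (t + 1) = m1 l * W i l t + m2 l * W (i + 1) l t
        + m3 l * W (i + 1) (l + 1) t + m4 l * W i (l + 1) t)
    (kstar : ℕ) (hkstar2 : kstar ≤ k)
    (W' : ℕ → ℕ → ℕ → ℝ)
    (hW'win : ∀ i l t, k - kstar ≤ i → W' i l t = 1)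
    (hW'zero : ∀ i l, i < k - kstar → W' i l 0 = 0)
    (hW'rec : ∀ i l t, i < k - kstar →
      W' i l (t + 1) = m1 (l + Lstar) * W' i l t + m2 (l + Lstar) * W' (i + 1) l t
        + m3 (l + Lstar) * W' (i + 1) (l + 1) t + m4 (l + Lstar) * W' i (l + 1) t)
    (x y z : ℝ)
    (hx : x = (1 - γ) * p / (γ + (1 - γ) * (p + h)))
    (hy : y = γ * p / (γ + (1 - γ) * (p + h)))
    (hz : z = 1 - x - y)
    (q : ℕ → ℕ → ℝ)
    (hq00 : q 0 0 = 1)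
    (hqn0 : ∀ n, q (n + 1) 0 = x * q n 0)
    (hq0m : ∀ m, q 0 (m + 1) = z * q 0 m)
    (hqrec : ∀ n m, q (n + 1) (m + 1) = x * q n (m + 1) + y * q n m + z * q (n + 1) m)
    (T : ℕ) :
    W 0 0 T ≤
      (1 - ((∑ n ∈ Finset.range kstar, q n (Lstar - 1)) * (y + z)
              + q kstar (Lstar - 1) * z))
        + W' 0 0 T := by
  have hs : 0 < γ + (1 - γ) * (p + h) := by nlinarith
  have hm := isStochastic_of_learningRate hp.le hh hph hγ0.le hγ1.le hf0 hf1 hm1 hm2 hm3 hm4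
  have hW : IsWinProb m1 m2 m3 m4 k W := ⟨hWwin, hWzero, hWrec⟩
  have hW' : IsWinProb (fun l => m1 (l + Lstar)) (fun l => m2 (l + Lstar))
      (fun l => m3 (l + Lstar)) (fun l => m4 (l + Lstar)) (k - kstar) W' :=
    ⟨hW'win, hW'zero, hW'rec⟩
  have hq : IsVisitProb x y z q := ⟨hq00, hqn0, hq0m, hqrec⟩
  have hx0 : 0 ≤ x := hx ▸ div_nonneg (mul_nonneg (by linarith) hp.le) hs.le
  have hy0 : 0 ≤ y := hy ▸ div_nonneg (mul_nonneg hγ0.le hp.le) hs.le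
  have hxy : x + y ≤ 1 := by
    rw [hx, hy, ← add_div, div_le_one hs]
    nlinarith
  have hz0 : 0 ≤ z := by linarith
  have hpre : ∀ l < Lstar, m1 l = 1 - (γ + (1 - γ) * (p + h)) ∧
      m2 l = (γ + (1 - γ) * (p + h)) * x ∧ m3 l = (γ + (1 - γ) * (p + h)) * y ∧
      m4 l = (γ + (1 - γ) * (p + h)) * z := by
    intro l hl
    simp only [hm1, hm2, hm3, hm4, hdelay l hl, hz, hx, hy]
    refine ⟨by ring, ?_, ?_, ?_⟩ <;> field_simp <;> ring
  have hB (i t : ℕ) (hi : i ≤ kstar) : W i Lstar t ≤ W' 0 0 t := by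
    simpa using hW.le_of_shift hm hW' t i 0 0 (by omega)
  have key := hW.le_one_sub_levelFirstProb_add hm hx0 hy0 hz0 (by rw [hz]; ring) hpre
    (hW'.monotone (hm.comp_add_right Lstar) 0 0) hB T 0 (kstar + 1) 0 Lstar (by omega) (by omega)
  rwa [← Nat.sub_add_cancel hLstar, hq.levelFirstProb_eq] at key

/-- **Delayed learning decomposition (Theorem 5, inequality (12)).**
If `f l = 0` for `l < L*`, then the winning probability `w(k,T) = W 0 0 T` satisfies
`w(k,T) ≤ (1 - u(k*,L*)) + w'(k-k*,T)` for every `L*+1 ≤ k* ≤ k` and `T ≥ 0`, where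
`w'` is the winning probability for the shifted learning rate `l ↦ f (l + L*)` and
`u(k*,L*)` is the probability that at most `k*` progressive moves occur before the
defender's level reaches `L*`. -/
theorem delayed_learning_decomposition
    (p h γ : ℝ) (hp : 0 < p) (hh : 0 ≤ h) (hph : p + h ≤ 1)
    (hγ0 : 0 < γ) (hγ1 : γ < 1)
    (f : ℕ → ℝ) (hf0 : ∀ l, 0 ≤ f l) (hf1 : ∀ l, f l ≤ 1)
    (m1 m2 m3 m4 : ℕ → ℝ)
    (hm1 : ∀ l, m1 l = f l * (1 - γ) + (1 - f l) * (1 - γ) * (1 - p - h))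
    (hm2 : ∀ l, m2 l = (1 - f l) * (1 - γ) * p)
    (hm3 : ∀ l, m3 l = (1 - f l) * γ * p)
    (hm4 : ∀ l, m4 l = (1 - f l) * (1 - γ) * h + f l * γ + (1 - f l) * γ * (1 - p))
    (Lstar : ℕ) (hLstar : 1 ≤ Lstar)
    (hdelay : ∀ l, l < Lstar → f l = 0)
    (k : ℕ) (hk : 1 ≤ k)
    (W : ℕ → ℕ → ℕ → ℝ)
    (hWwin : ∀ i l t, k ≤ i → W i l t = 1)
    (hWzero : ∀ i l, i < k → W i l 0 = 0)
    (hWrec : ∀ i l t, i < k →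
      W i l (t + 1) = m1 l * W i l t + m2 l * W (i + 1) l t
        + m3 l * W (i + 1) (l + 1) t + m4 l * W i (l + 1) t)
    (kstar : ℕ) (hkstar1 : Lstar + 1 ≤ kstar) (hkstar2 : kstar ≤ k)
    (W' : ℕ → ℕ → ℕ → ℝ)
    (hW'win : ∀ i l t, k - kstar ≤ i → W' i l t = 1)
    (hW'zero : ∀ i l, i < k - kstar → W' i l 0 = 0)
    (hW'rec : ∀ i l t, i < k - kstar →
      W' i l (t + 1) = m1 (l + Lstar) * W' i l t + m2 (l + Lstar) * W' (i + 1) l t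
        + m3 (l + Lstar) * W' (i + 1) (l + 1) t + m4 (l + Lstar) * W' i (l + 1) t)
    (x y z : ℝ)
    (hx : x = (1 - γ) * p / (γ + (1 - γ) * (p + h)))
    (hy : y = γ * p / (γ + (1 - γ) * (p + h)))
    (hz : z = 1 - x - y)
    (q : ℕ → ℕ → ℝ)
    (hq00 : q 0 0 = 1)
    (hqn0 : ∀ n, q (n + 1) 0 = x * q n 0)
    (hq0m : ∀ m, q 0 (m + 1) = z * q 0 m)
    (hqrec : ∀ n m, q (n + 1) (m + 1) = x * q n (m + 1) + y * q n m + z * q (n + 1) m)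
    (T : ℕ) :
    W 0 0 T ≤
      (1 - ((∑ n ∈ Finset.range kstar, q n (Lstar - 1)) * (y + z)
              + q kstar (Lstar - 1) * z))
        + W' 0 0 T :=
  delayed_learning_decomposition_general p h γ hp hh hph hγ0 hγ1 f hf0 hf1 m1 m2 m3 m4 hm1 hm2 hm3
    hm4 Lstar hLstar hdelay k W hWwin hWzero hWrec kstar hkstar2 W' hW'win hW'zero hW'rec x y z hx
    hy hz q hq00 hqn0 hq0m hqrec T
end

section
/- Let (Ω, μ) be a probability space, a ≥ 1 an integer, X_1, …, X_a : Ω → ℕ independent random variables, k_1, …, k_a positive integers, and ε a real with 0 ≤ ε ≤ a. If μ(X_i ≥ k_i) ≤ ε/a for every i, then μ(X_1 + ⋯ + X_a ≥ k_1 + ⋯ + k_a) ≤ 1 - ∏_{i=1}^{a} (1 - ε/a) ≤ ε. -/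
open MeasureTheory ProbabilityTheory

/-!
If the sum of the `X i` reaches the sum of the `k i`, then by pigeonhole some `X i` reaches its
own `k i`. The target event therefore lies in the union of the independent events
`{k i ≤ X i}`, whose complement `⋂ i, {X i < k i}` has probability `∏ i, (1 - μ {k i ≤ X i})`
by independence. The final bound `1 - (1 - ε / a) ^ a ≤ ε` is Bernoulli's inequality.
-/

lemma ProbabilityTheory.iIndepFun.measureReal_iUnion_preimage {Ω ι : Type*} {β : ι → Type*}
    [Fintype ι] [MeasurableSpace Ω] {μ : Measure Ω} [IsProbabilityMeasure μ]
    [∀ i, MeasurableSpace (β i)] {X : ∀ i, Ω → β i} (hX : iIndepFun X μ)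
    (hXm : ∀ i, Measurable (X i)) {S : ∀ i, Set (β i)} (hS : ∀ i, MeasurableSet (S i)) :
    μ.real (⋃ i, X i ⁻¹' S i) = 1 - ∏ i, (1 - μ.real (X i ⁻¹' S i)) := by
  have hinter : μ.real (⋂ i, X i ⁻¹' (S i)ᶜ) = ∏ i, μ.real (X i ⁻¹' (S i)ᶜ) := by
    simp only [measureReal_def, ← ENNReal.toReal_prod]
    rw [hX.meas_iInter fun i ↦ ⟨(S i)ᶜ, (hS i).compl, rfl⟩]
  have hunion : ⋃ i, X i ⁻¹' S i = (⋂ i, X i ⁻¹' (S i)ᶜ)ᶜ := by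
    simp only [Set.preimage_compl, Set.compl_iInter, compl_compl]
  rw [hunion, probReal_compl_eq_one_sub (.iInter fun i ↦ hXm i (hS i).compl), hinter]
  simp only [Set.preimage_compl, probReal_compl_eq_one_sub (hXm _ (hS _))]

lemma one_sub_le_one_sub_div_pow {n : ℕ} (hn : 0 < n) {x : ℝ} (hx : x ≤ 2 * n) :
    1 - x ≤ (1 - x / n) ^ n := by
  have hn' : (0 : ℝ) < n := by exact_mod_cast hn
  have h := one_add_mul_le_pow (a := -(x / n)) (by rw [neg_le_neg_iff, div_le_iff₀ hn']; linarith) n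
  rwa [mul_neg, mul_div_cancel₀ x hn'.ne', ← sub_eq_add_neg, ← sub_eq_add_neg] at h

lemma setOf_sum_le_sum_subset_iUnion {Ω ι M : Type*} [Fintype ι] [Nonempty ι]
    [AddCommMonoid M] [LinearOrder M] [IsOrderedCancelAddMonoid M] (X : ι → Ω → M) (k : ι → M) :
    {ω | ∑ i, k i ≤ ∑ i, X i ω} ⊆ ⋃ i, X i ⁻¹' {n | k i ≤ n} := fun ω hω ↦ by
  obtain ⟨i, -, hi⟩ := Finset.exists_le_of_sum_le Finset.univ_nonempty hω
  exact Set.mem_iUnion.2 ⟨i, hi⟩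

theorem composition_of_simultaneous_games_general
    {Ω : Type*} [MeasurableSpace Ω] (μ : Measure Ω) [IsProbabilityMeasure μ]
    (a : ℕ) (ha : 1 ≤ a)
    (X : Fin a → Ω → ℕ)
    (hXmeas : ∀ i, Measurable (X i))
    (hXindep : iIndepFun X μ)
    (k : Fin a → ℕ)
    (ε : ℝ) (hεa : ε ≤ (a : ℝ))
    (hbound : ∀ i, (μ {ω | k i ≤ X i ω}).toReal ≤ ε / (a : ℝ)) :
    (μ {ω | (∑ i, k i) ≤ ∑ i, X i ω}).toReal ≤ 1 - ∏ _i : Fin a, (1 - ε / (a : ℝ)) ∧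
      1 - ∏ _i : Fin a, (1 - ε / (a : ℝ)) ≤ ε := by
  have : Nonempty (Fin a) := ⟨⟨0, ha⟩⟩
  have hεa1 : ε / a ≤ 1 := div_le_one_of_le₀ hεa (Nat.cast_nonneg a)
  simp only [← measureReal_def] at hbound ⊢
  refine ⟨?_, ?_⟩
  · calc μ.real {ω | ∑ i, k i ≤ ∑ i, X i ω}
        ≤ μ.real (⋃ i, X i ⁻¹' {n | k i ≤ n}) :=
          measureReal_mono (setOf_sum_le_sum_subset_iUnion X k)
      _ = 1 - ∏ i, (1 - μ.real (X i ⁻¹' {n | k i ≤ n})) :=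
          hXindep.measureReal_iUnion_preimage hXmeas fun _ ↦ measurableSet_Ici
      _ ≤ 1 - ∏ _i : Fin a, (1 - ε / a) := by
          gcongr with i
          exact hbound i
  · rw [Finset.prod_const, Finset.card_univ, Fintype.card_fin]
    linarith [one_sub_le_one_sub_div_pow ha (x := ε) (by linarith)]

/-- **Composition of simultaneous games (Theorem 6).**
If `X_1, …, X_a` are independent ℕ-valued random variables on a probability space,
`k_1, …, k_a` are positive integers, and each `μ(X_i ≥ k_i) ≤ ε/a`, then
`μ(X_1 + ⋯ + X_a ≥ k_1 + ⋯ + k_a) ≤ 1 - ∏_{i=1}^a (1 - ε/a) ≤ ε`. -/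
theorem composition_of_simultaneous_games
    {Ω : Type*} [MeasurableSpace Ω] (μ : Measure Ω) [IsProbabilityMeasure μ]
    (a : ℕ) (ha : 1 ≤ a)
    (X : Fin a → Ω → ℕ)
    (hXmeas : ∀ i, Measurable (X i))
    (hXindep : iIndepFun X μ)
    (k : Fin a → ℕ) (hk : ∀ i, 1 ≤ k i)
    (ε : ℝ) (hε0 : 0 ≤ ε) (hεa : ε ≤ (a : ℝ))
    (hbound : ∀ i, (μ {ω | k i ≤ X i ω}).toReal ≤ ε / (a : ℝ)) :
    (μ {ω | (∑ i, k i) ≤ ∑ i, X i ω}).toReal ≤ 1 - ∏ _i : Fin a, (1 - ε / (a : ℝ)) ∧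
      1 - ∏ _i : Fin a, (1 - ε / (a : ℝ)) ≤ ε :=
  composition_of_simultaneous_games_general μ a ha X hXmeas hXindep k ε hεa hbound
end

section
/- Assume 1 - f(l) ≤ d/(l+2)² for all l ∈ ℕ, where d > 0 and p·d·(1-γ)/γ < 1. Set q = 1/ln(γ/(p·d·(1-γ))). Then for every integer k ≥ 1 and all reals s, t ≥ 0 satisfying both (i) t·γ·(ln 2)/(1-γ) ≤ k - γ/(1-γ) and (ii) s·q·ln 2 + t·q·(ln 2)·(1 + 1/(1-γ)) ≤ k + q·(−1/(1-γ) + ln(1/(1-γ))), and every integer T with 1 ≤ T ≤ 2^t, it holds that w̄(k,T) ≤ 2^{-s}. -/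
/-
Bound `α l ≤ b l := (p d / γ) / (l + 2) ^ 2` and `1 - α l ≤ 1` in the recursion for `pr`. The
coefficients of `exp (γ S_i z) / (1 - (1 - γ) S_{i+1} z)`, where `S_i = b 0 + ⋯ + b (i - 1)`,
satisfy the resulting recursion as an inequality, so they dominate `pr j i`, and the `j`-th one is
at most `((1 - γ) S_{i+1}) ^ j exp (γ / (1 - γ))`. Hence
`w̄(k,T) ≤ S_T ((1 - γ) S_T) ^ (k - 1) exp (γ / (1 - γ))` with `S_T ≤ p d / γ`, and conditions (i)
and (ii) make the logarithm of this bound at most `-s log 2`: for `T = 1` because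
`S_1 = p d / (4 γ)`, for `T ≥ 2` because then `t ≥ 1`.
-/

open Finset Real
open scoped Nat

-- The coefficient of `z ^ j` in `exp (u z) / (1 - v z)`.
noncomputable def expGeomCoeff (u v : ℝ) (j : ℕ) : ℝ :=
  ∑ g ∈ range (j + 1), u ^ g / g ! * v ^ (j - g)

section

variable {u u' v v' r : ℝ}

@[simp]
lemma expGeomCoeff_zero (u v : ℝ) : expGeomCoeff u v 0 = 1 := by
  simp [expGeomCoeff]

lemma expGeomCoeff_zero_left (v : ℝ) (j : ℕ) : expGeomCoeff 0 v j = v ^ j := by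
  simp [expGeomCoeff, sum_range_succ']

lemma expGeomCoeff_nonneg (hu : 0 ≤ u) (hv : 0 ≤ v) (j : ℕ) : 0 ≤ expGeomCoeff u v j :=
  sum_nonneg fun _ _ ↦ by positivity

lemma expGeomCoeff_le_mul_exp (hu : 0 ≤ u) (hv : 0 ≤ v) (hr : 0 ≤ r) (huv : u ≤ r * v)
    (j : ℕ) : expGeomCoeff u v j ≤ v ^ j * exp r :=
  calc expGeomCoeff u v j
      ≤ ∑ g ∈ range (j + 1), (r * v) ^ g / g ! * v ^ (j - g) := by
        unfold expGeomCoeff; gcongr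
    _ = v ^ j * ∑ g ∈ range (j + 1), r ^ g / g ! := by
        rw [mul_sum]
        refine sum_congr rfl fun g hg ↦ ?_
        rw [← pow_mul_pow_sub v (Nat.lt_succ_iff.mp (mem_range.mp hg)), mul_pow]
        ring
    _ ≤ v ^ j * exp r := by gcongr; exact sum_le_exp_of_nonneg hr _

lemma sub_mul_pow_le_pow_succ_sub_pow_succ {x y : ℝ} (hy : 0 ≤ y) (hyx : y ≤ x) (n : ℕ) :
    (x - y) * x ^ n ≤ x ^ (n + 1) - y ^ (n + 1) := by
  have := mul_le_mul_of_nonneg_left (pow_le_pow_left₀ hy hyx n) hy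
  rw [pow_succ', pow_succ']
  linarith

lemma succ_mul_pow_mul_sub_le_pow_succ_sub_pow_succ {x y : ℝ} (hy : 0 ≤ y) (hyx : y ≤ x)
    (n : ℕ) : (n + 1) * y ^ n * (x - y) ≤ x ^ (n + 1) - y ^ (n + 1) := by
  induction n with
  | zero => simp
  | succ n ih =>
    have hxy : 0 ≤ x - y := sub_nonneg.mpr hyx
    calc ((n + 1 : ℕ) + 1) * y ^ (n + 1) * (x - y)
        = y * ((n + 1) * y ^ n * (x - y)) + y ^ (n + 1) * (x - y) := by push_cast; ring
      _ ≤ x * ((n + 1) * y ^ n * (x - y)) + y ^ (n + 1) * (x - y) := by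
        gcongr
      _ ≤ x * (x ^ (n + 1) - y ^ (n + 1)) + y ^ (n + 1) * (x - y) := by
        gcongr; exact hy.trans hyx
      _ = x ^ (n + 1 + 1) - y ^ (n + 1 + 1) := by ring

lemma sub_mul_pow_div_factorial_le {x y : ℝ} (hy : 0 ≤ y) (hyx : y ≤ x) (n : ℕ) :
    (x - y) * (y ^ n / n !) ≤ x ^ (n + 1) / (n + 1)! - y ^ (n + 1) / (n + 1)! := by
  rw [← sub_div, le_div_iff₀ (by positivity), Nat.factorial_succ, Nat.cast_mul]
  refine (le_of_eq ?_).trans (succ_mul_pow_mul_sub_le_pow_succ_sub_pow_succ hy hyx n)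
  push_cast
  field_simp

lemma expGeomCoeff_add_le_of_le_left (hu : 0 ≤ u) (huu : u ≤ u') (hv : 0 ≤ v) (j : ℕ) :
    (u' - u) * expGeomCoeff u v j + expGeomCoeff u v (j + 1) ≤ expGeomCoeff u' v (j + 1) := by
  simp only [expGeomCoeff, sum_range_succ' _ (j + 1), mul_sum, Nat.add_sub_add_right]
  suffices ∀ g ∈ range (j + 1), (u' - u) * (u ^ g / g ! * v ^ (j - g)) +
      u ^ (g + 1) / (g + 1)! * v ^ (j - g) ≤ u' ^ (g + 1) / (g + 1)! * v ^ (j - g) by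
    have := sum_le_sum this
    rw [sum_add_distrib] at this
    simp only [pow_zero, Nat.factorial_zero]
    linarith
  intro g _
  have := mul_le_mul_of_nonneg_right (sub_mul_pow_div_factorial_le hu huu g) (pow_nonneg hv (j - g))
  linarith

lemma expGeomCoeff_add_le_of_le_right (hu : 0 ≤ u) (hv : 0 ≤ v) (hvv : v ≤ v') (j : ℕ) :
    (v' - v) * expGeomCoeff u v' j + expGeomCoeff u v (j + 1) ≤ expGeomCoeff u v' (j + 1) := by
  simp only [expGeomCoeff, sum_range_succ _ (j + 1), mul_sum, Nat.sub_self, pow_zero]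
  suffices ∀ g ∈ range (j + 1), (v' - v) * (u ^ g / g ! * v' ^ (j - g)) +
      u ^ g / g ! * v ^ (j + 1 - g) ≤ u ^ g / g ! * v' ^ (j + 1 - g) by
    have := sum_le_sum this
    rw [sum_add_distrib] at this
    linarith
  intro g hg
  rw [Nat.sub_add_comm (Nat.lt_succ_iff.mp (mem_range.mp hg))]
  have := mul_le_mul_of_nonneg_left (sub_mul_pow_le_pow_succ_sub_pow_succ hv hvv (j - g))
    (show 0 ≤ u ^ g / (g ! : ℝ) by positivity)
  linarith

lemma expGeomCoeff_add_le (hu : 0 ≤ u) (huu : u ≤ u') (hv : 0 ≤ v) (hvv : v ≤ v') (j : ℕ) :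
    (v' - v) * expGeomCoeff u' v' j + (u' - u) * expGeomCoeff u v j + expGeomCoeff u v (j + 1)
      ≤ expGeomCoeff u' v' (j + 1) := by
  have := expGeomCoeff_add_le_of_le_left hu huu hv j
  have := expGeomCoeff_add_le_of_le_right (hu.trans huu) hv hvv j
  linarith

end

section

variable {γ : ℝ} {α b : ℕ → ℝ} {pr : ℕ → ℕ → ℝ}

lemma pr_zero_mem_Icc (hα0 : ∀ l, 0 ≤ α l) (hα1 : ∀ l, α l ≤ 1) (hpr00 : pr 0 0 = 1)
    (hpr0 : ∀ i, pr 0 (i + 1) = (1 - α i) * pr 0 i) (i : ℕ) : pr 0 i ∈ Set.Icc 0 1 := by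
  induction i with
  | zero => simp [hpr00]
  | succ i ih =>
    rw [hpr0]
    exact ⟨mul_nonneg (sub_nonneg.mpr (hα1 i)) ih.1,
      mul_le_one₀ (sub_le_self _ (hα0 i)) ih.1 ih.2⟩

lemma pr_le_expGeomCoeff (hγ0 : 0 ≤ γ) (hγ1 : γ ≤ 1) (hα0 : ∀ l, 0 ≤ α l)
    (hα1 : ∀ l, α l ≤ 1) (hαb : ∀ l, α l ≤ b l)
    (hpr00 : pr 0 0 = 1)
    (hpr0 : ∀ i, pr 0 (i + 1) = (1 - α i) * pr 0 i)
    (hprj0 : ∀ j, pr (j + 1) 0 = ((1 - γ) * α 0) ^ (j + 1))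
    (hprrec : ∀ j i, pr (j + 1) (i + 1) =
      (1 - γ) * α (i + 1) * pr j (i + 1) + γ * α i * pr j i + (1 - α i) * pr (j + 1) i)
    (j i : ℕ) :
    pr j i ≤ expGeomCoeff (γ * ∑ l ∈ range i, b l) ((1 - γ) * ∑ l ∈ range (i + 1), b l) j := by
  have hb : ∀ l, 0 ≤ b l := fun l ↦ (hα0 l).trans (hαb l)
  have hS : ∀ i, 0 ≤ ∑ l ∈ range i, b l := fun i ↦ sum_nonneg fun l _ ↦ hb l
  have hSS : ∀ i, ∑ l ∈ range i, b l ≤ ∑ l ∈ range (i + 1), b l := fun i ↦ by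
    rw [sum_range_succ]; linarith [hb i]
  have h1γ : 0 ≤ 1 - γ := sub_nonneg.mpr hγ1
  have hM : ∀ j i, 0 ≤ expGeomCoeff (γ * ∑ l ∈ range i, b l)
      ((1 - γ) * ∑ l ∈ range (i + 1), b l) j := fun j i ↦
    expGeomCoeff_nonneg (mul_nonneg hγ0 (hS i)) (mul_nonneg h1γ (hS (i + 1))) j
  induction j generalizing i with
  | zero => simpa using (pr_zero_mem_Icc hα0 hα1 hpr00 hpr0 i).2
  | succ j ih =>
    induction i with
    | zero =>
      simp only [hprj0, range_zero, sum_empty, mul_zero, expGeomCoeff_zero_left, zero_add,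
        sum_range_one]
      exact pow_le_pow_left₀ (mul_nonneg h1γ (hα0 0))
        (mul_le_mul_of_nonneg_left (hαb 0) h1γ) _
    | succ i ihi =>
      have hstep := expGeomCoeff_add_le (mul_nonneg hγ0 (hS i))
        (mul_le_mul_of_nonneg_left (hSS i) hγ0) (mul_nonneg h1γ (hS (i + 1)))
        (mul_le_mul_of_nonneg_left (hSS (i + 1)) h1γ) j
      simp only [sum_range_succ _ (i + 1), sum_range_succ _ i] at hstep ⊢
      have h1 := mul_le_mul_of_nonneg_left
        (mul_le_mul_of_nonneg (hαb (i + 1)) (ih (i + 1)) (hα0 _) (hM j (i + 1))) h1γ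
      have h2 := mul_le_mul_of_nonneg_left
        (mul_le_mul_of_nonneg (hαb i) (ih i) (hα0 _) (hM j i)) hγ0
      have h3 := mul_le_mul_of_nonneg (sub_le_self _ (hα0 i)) ihi (sub_nonneg.mpr (hα1 i))
        (hM (j + 1) i)
      simp only [sum_range_succ] at h1 h2 h3
      rw [hprrec]
      linarith

lemma sum_mul_pr_le (hγ0 : 0 ≤ γ) (hγ1 : γ < 1) (hα0 : ∀ l, 0 ≤ α l)
    (hα1 : ∀ l, α l ≤ 1) (hαb : ∀ l, α l ≤ b l)
    (hpr00 : pr 0 0 = 1)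
    (hpr0 : ∀ i, pr 0 (i + 1) = (1 - α i) * pr 0 i)
    (hprj0 : ∀ j, pr (j + 1) 0 = ((1 - γ) * α 0) ^ (j + 1))
    (hprrec : ∀ j i, pr (j + 1) (i + 1) =
      (1 - γ) * α (i + 1) * pr j (i + 1) + γ * α i * pr j i + (1 - α i) * pr (j + 1) i)
    (K T : ℕ) :
    ∑ i ∈ range T, α i * pr K i ≤
      (∑ l ∈ range T, b l) * ((1 - γ) * ∑ l ∈ range T, b l) ^ K * exp (γ / (1 - γ)) := by
  have h1γ : 0 < 1 - γ := sub_pos.mpr hγ1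
  have hb : ∀ l, 0 ≤ b l := fun l ↦ (hα0 l).trans (hαb l)
  have hS : ∀ i, 0 ≤ ∑ l ∈ range i, b l := fun i ↦ sum_nonneg fun l _ ↦ hb l
  have hSle : ∀ {i j}, i ≤ j → ∑ l ∈ range i, b l ≤ ∑ l ∈ range j, b l := fun h ↦
    sum_le_sum_of_subset_of_nonneg (range_subset_range.mpr h) fun l _ _ ↦ hb l
  have hterm : ∀ i ∈ range T, α i * pr K i ≤
      b i * (((1 - γ) * ∑ l ∈ range T, b l) ^ K * exp (γ / (1 - γ))) := by
    intro i hi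
    have huv : γ * ∑ l ∈ range i, b l ≤ γ / (1 - γ) * ((1 - γ) * ∑ l ∈ range (i + 1), b l) := by
      rw [← mul_assoc, div_mul_cancel₀ γ h1γ.ne']
      exact mul_le_mul_of_nonneg_left (hSle i.le_succ) hγ0
    have hM := expGeomCoeff_le_mul_exp (mul_nonneg hγ0 (hS i)) (mul_nonneg h1γ.le (hS (i + 1)))
      (div_nonneg hγ0 h1γ.le) huv K
    calc α i * pr K i
        ≤ b i * expGeomCoeff (γ * ∑ l ∈ range i, b l) ((1 - γ) * ∑ l ∈ range (i + 1), b l) K :=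
          mul_le_mul_of_nonneg (hαb i) (pr_le_expGeomCoeff hγ0 hγ1.le hα0 hα1 hαb hpr00 hpr0
            hprj0 hprrec K i) (hα0 i) (expGeomCoeff_nonneg (mul_nonneg hγ0 (hS i))
              (mul_nonneg h1γ.le (hS (i + 1))) K)
      _ ≤ b i * (((1 - γ) * ∑ l ∈ range (i + 1), b l) ^ K * exp (γ / (1 - γ))) :=
          mul_le_mul_of_nonneg_left hM (hb i)
      _ ≤ b i * (((1 - γ) * ∑ l ∈ range T, b l) ^ K * exp (γ / (1 - γ))) := by
          have := hSle (mem_range.mp hi)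
          have := hS (i + 1)
          have := hb i
          gcongr
  calc ∑ i ∈ range T, α i * pr K i
      ≤ ∑ i ∈ range T, b i * (((1 - γ) * ∑ l ∈ range T, b l) ^ K * exp (γ / (1 - γ))) :=
        sum_le_sum hterm
    _ = _ := by rw [← sum_mul, mul_assoc]

end

section

variable {p h γ y : ℝ}

lemma alpha_nonneg (hp : 0 ≤ p) (hh : 0 ≤ h) (hγ0 : 0 < γ) (hγ1 : γ < 1) (hy : 0 ≤ y) :
    0 ≤ p * y / (γ + (1 - γ) * (p + h) * y) := by
  have : 0 ≤ 1 - γ := by linarith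
  positivity

lemma alpha_le_one (hp : 0 ≤ p) (hh : 0 ≤ h) (hph : p + h ≤ 1) (hγ0 : 0 < γ) (hγ1 : γ < 1)
    (hy0 : 0 ≤ y) (hy1 : y ≤ 1) :
    p * y / (γ + (1 - γ) * (p + h) * y) ≤ 1 := by
  have h1γ : 0 ≤ 1 - γ := by linarith
  rw [div_le_one (by positivity)]
  have : p * y ≤ 1 := mul_le_one₀ (by linarith) hy0 hy1
  nlinarith [mul_nonneg (mul_nonneg h1γ hh) hy0]

lemma alpha_le_div (hp : 0 ≤ p) (hh : 0 ≤ h) (hγ0 : 0 < γ) (hγ1 : γ < 1) (hy : 0 ≤ y) :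
    p * y / (γ + (1 - γ) * (p + h) * y) ≤ p * y / γ := by
  have : 0 ≤ 1 - γ := by linarith
  gcongr
  exact le_add_of_nonneg_right (by positivity)

end

lemma sum_range_one_div_add_two_sq_le_one (T : ℕ) : ∑ l ∈ range T, 1 / ((l : ℝ) + 2) ^ 2 ≤ 1 := by
  have := sum_Ioo_inv_sq_le (α := ℝ) 1 (T + 2)
  rw [← Finset.Ico_add_one_left_eq_Ioo, sum_Ico_eq_sum_range] at this
  norm_num at this
  exact (sum_congr rfl fun l _ ↦ by ring).trans_le this

lemma two_mul_log_le_sub_one {x : ℝ} (hx : 0 < x) : 2 * log x ≤ 2 * log 2 * (x - 1) + 1 := by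
  have h₁ := log_le_sub_one_of_pos (show 0 < x * (2 / 3) by positivity)
  have h₂ := log_le_sub_one_of_pos (show (0 : ℝ) < 3 / 2 by norm_num)
  rw [log_mul hx.ne' (by norm_num), show (2 : ℝ) / 3 = (3 / 2)⁻¹ by norm_num, log_inv] at h₁
  linarith [mul_le_mul_of_nonneg_left log_two_gt_d9.le hx.le, log_two_lt_d9]

lemma two_mul_log_le_add_one {x : ℝ} (hx : 0 < x) : 2 * log x ≤ log 2 * (x + 1) + 1 := by
  have h₁ := log_le_sub_one_of_pos (show 0 < x / 3 by positivity)
  have h₂ : log 3 ≤ 2 * log 2 := by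
    rw [← log_rpow two_pos]; exact log_le_log (by norm_num) (by norm_num)
  rw [log_div hx.ne' (by norm_num)] at h₁
  linarith [mul_le_mul_of_nonneg_left log_two_gt_d9.le hx.le, log_two_lt_d9]

lemma capacity_log_estimate {γ t : ℝ} (hγ0 : 0 < γ) (hγ1 : γ < 1) (ht : 0 ≤ t) {K T : ℕ}
    (hT1 : 1 ≤ T) (hT2 : (T : ℝ) ≤ 2 ^ t)
    (hcond1 : t * γ * log 2 / (1 - γ) ≤ (K : ℝ) + 1 - γ / (1 - γ)) :
    ((K : ℝ) + 1) * log (∑ l ∈ range T, 1 / ((l : ℝ) + 2) ^ 2) + 2 * log (1 / (1 - γ)) ≤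
      t * log 2 * (1 + 1 / (1 - γ)) + 1 := by
  have h1γ : 0 < 1 - γ := sub_pos.mpr hγ1
  have hU : 0 < 1 / (1 - γ) := by positivity
  have hlog2 : 0 < log 2 := log_pos one_lt_two
  have hrhs : 0 ≤ t * log 2 * (1 + 1 / (1 - γ)) := by positivity
  rcases hT1.eq_or_lt with rfl | hT
  · have hθ : log (∑ l ∈ range 1, 1 / ((l : ℝ) + 2) ^ 2) = -(2 * log 2) := by
      rw [sum_range_one, Nat.cast_zero, zero_add, one_div, log_inv, log_pow, Nat.cast_two]
    have hu : 1 / (1 - γ) - 1 ≤ (K : ℝ) + 1 := by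
      have : 0 ≤ t * γ * log 2 / (1 - γ) := by positivity
      have : 1 / (1 - γ) - 1 = γ / (1 - γ) := by field_simp; ring
      linarith
    have := two_mul_log_le_sub_one hU
    rw [hθ]
    linarith [mul_le_mul_of_nonneg_left hu hlog2.le]
  · have hθ : log (∑ l ∈ range T, 1 / ((l : ℝ) + 2) ^ 2) ≤ 0 :=
      log_nonpos (sum_nonneg fun _ _ ↦ by positivity) (sum_range_one_div_add_two_sq_le_one T)
    have ht1 : 1 ≤ t := by
      have : (2 : ℝ) ^ (1 : ℝ) ≤ 2 ^ t := by
        rw [rpow_one]; exact le_trans (by exact_mod_cast hT) hT2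
      exact (rpow_le_rpow_left_iff one_lt_two).mp this
    have := two_mul_log_le_add_one hU
    have : log 2 * (1 / (1 - γ) + 1) ≤ t * log 2 * (1 + 1 / (1 - γ)) := by
      rw [add_comm]
      exact mul_le_mul_of_nonneg_right (le_mul_of_one_le_left hlog2.le ht1) (by positivity)
    linarith [mul_nonpos_of_nonneg_of_nonpos (show (0 : ℝ) ≤ K + 1 by positivity) hθ]

lemma capacity_bound_le_two_rpow_neg {γ c θ q s t : ℝ} (hγ1 : γ < 1) (hc : 0 < c)
    (hθ : 0 < θ) (hρ : c * (1 - γ) < 1) (hq : q = 1 / log (1 / (c * (1 - γ)))) (K : ℕ)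
    (hkey : ((K : ℝ) + 1) * log θ + 2 * log (1 / (1 - γ)) ≤ t * log 2 * (1 + 1 / (1 - γ)) + 1)
    (hcond2 : s * q * log 2 + t * q * log 2 * (1 + 1 / (1 - γ)) ≤
      (K : ℝ) + 1 + q * (-(1 / (1 - γ)) + log (1 / (1 - γ)))) :
    c * θ * ((1 - γ) * (c * θ)) ^ K * exp (γ / (1 - γ)) ≤ 2 ^ (-s) := by
  have h1γ : 0 < 1 - γ := sub_pos.mpr hγ1
  have hL : 0 < log (1 / (c * (1 - γ))) := log_pos ((one_lt_div (by positivity)).mpr hρ)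
  have hcond2' : s * log 2 + t * log 2 * (1 + 1 / (1 - γ)) + 1 / (1 - γ) - log (1 / (1 - γ)) ≤
      ((K : ℝ) + 1) * log (1 / (c * (1 - γ))) := by
    rw [← div_le_iff₀ hL, div_eq_mul_one_div, mul_comm, ← hq]
    linarith
  have hr : γ / (1 - γ) = 1 / (1 - γ) - 1 := by field_simp; ring
  rw [le_rpow_iff_log_le (by positivity) two_pos, log_mul (by positivity) (exp_pos _).ne',
    log_mul (by positivity) (by positivity), log_pow, log_mul h1γ.ne' (by positivity),
    log_mul hc.ne' hθ.ne', log_exp, hr]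
  simp only [one_div, log_inv, log_mul hc.ne' h1γ.ne'] at hcond2' hkey ⊢
  linarith

theorem capacity_region_quadratic_learning_general
    (p h γ : ℝ) (hp : 0 < p) (hh : 0 ≤ h) (hph : p + h ≤ 1)
    (hγ0 : 0 < γ) (hγ1 : γ < 1)
    (f : ℕ → ℝ) (hf0 : ∀ l, 0 ≤ f l) (hf1 : ∀ l, f l ≤ 1)
    (α : ℕ → ℝ)
    (hα : ∀ l, α l = p * (1 - f l) / (γ + (1 - γ) * (p + h) * (1 - f l)))
    (pr : ℕ → ℕ → ℝ)
    (hpr00 : pr 0 0 = 1)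
    (hpr0 : ∀ i, pr 0 (i + 1) = (1 - α i) * pr 0 i)
    (hprj0 : ∀ j, pr (j + 1) 0 = ((1 - γ) * α 0) ^ (j + 1))
    (hprrec : ∀ j i, pr (j + 1) (i + 1) =
      (1 - γ) * α (i + 1) * pr j (i + 1) + γ * α i * pr j i + (1 - α i) * pr (j + 1) i)
    (d : ℝ) (hd : 0 < d)
    (hfd : ∀ l : ℕ, 1 - f l ≤ d / ((l : ℝ) + 2) ^ 2)
    (hpd : p * d * (1 - γ) / γ < 1)
    (q : ℝ) (hq : q = 1 / Real.log (γ / (p * d * (1 - γ))))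
    (k : ℕ) (hk : 1 ≤ k)
    (s t : ℝ) (ht : 0 ≤ t)
    (hcond1 : t * γ * Real.log 2 / (1 - γ) ≤ (k : ℝ) - γ / (1 - γ))
    (hcond2 : s * q * Real.log 2 + t * q * Real.log 2 * (1 + 1 / (1 - γ)) ≤
      (k : ℝ) + q * (-(1 / (1 - γ)) + Real.log (1 / (1 - γ))))
    (T : ℕ) (hT1 : 1 ≤ T) (hT2 : (T : ℝ) ≤ (2 : ℝ) ^ t) :
    ∑ i ∈ Finset.range T, α i * pr (k - 1) i ≤ (2 : ℝ) ^ (-s) := by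
  obtain ⟨K, rfl⟩ : ∃ K, k = K + 1 := ⟨k - 1, by omega⟩
  rw [Nat.add_sub_cancel]
  push_cast at hcond1 hcond2
  have hy0 : ∀ l, 0 ≤ 1 - f l := fun l ↦ sub_nonneg.mpr (hf1 l)
  have hαb : ∀ l, α l ≤ p * d / γ * (1 / ((l : ℝ) + 2) ^ 2) := fun l ↦ by
    rw [hα, show p * d / γ * (1 / ((l : ℝ) + 2) ^ 2) = p * (d / ((l : ℝ) + 2) ^ 2) / γ by ring]
    exact (alpha_le_div hp.le hh hγ0 hγ1 (hy0 l)).trans (by gcongr; exact hfd l)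
  have hsum := sum_mul_pr_le hγ0.le hγ1
    (fun l ↦ hα l ▸ alpha_nonneg hp.le hh hγ0 hγ1 (hy0 l))
    (fun l ↦ hα l ▸ alpha_le_one hp.le hh hph hγ0 hγ1 (hy0 l) (by linarith [hf0 l]))
    hαb hpr00 hpr0 hprj0 hprrec K T
  rw [← mul_sum] at hsum
  have hθ : 0 < ∑ l ∈ range T, 1 / ((l : ℝ) + 2) ^ 2 :=
    sum_pos (fun _ _ ↦ by positivity) (nonempty_range_iff.mpr (by omega))
  have hρ : p * d / γ * (1 - γ) < 1 := by rwa [div_mul_eq_mul_div]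
  have hq' : q = 1 / log (1 / (p * d / γ * (1 - γ))) := by rw [hq]; congr 2; field_simp
  exact hsum.trans (capacity_bound_le_two_rpow_neg hγ1 (by positivity) hθ hρ hq' K
    (capacity_log_estimate hγ0 hγ1 ht hT1 hT2 (by linarith)) hcond2)

/-- **Capacity region for the learning rate `1 - f(l) ≤ d/(l+2)²` (Corollary 1).**
With `q = 1/ln(γ/(pd(1-γ)))`, any `(s,t)` in the capacity region
`s·δ + t·μ ≤ k·(1,1) + ξ` (conditions (i) and (ii)) gives the security guarantee:
a time budget `T ≤ 2^t` implies a winning probability `w̄(k,T) ≤ 2^{-s}`. -/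
theorem capacity_region_quadratic_learning
    (p h γ : ℝ) (hp : 0 < p) (hh : 0 ≤ h) (hph : p + h ≤ 1)
    (hγ0 : 0 < γ) (hγ1 : γ < 1)
    (f : ℕ → ℝ) (hf0 : ∀ l, 0 ≤ f l) (hf1 : ∀ l, f l ≤ 1)
    (α : ℕ → ℝ)
    (hα : ∀ l, α l = p * (1 - f l) / (γ + (1 - γ) * (p + h) * (1 - f l)))
    (pr : ℕ → ℕ → ℝ)
    (hpr00 : pr 0 0 = 1)
    (hpr0 : ∀ i, pr 0 (i + 1) = (1 - α i) * pr 0 i)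
    (hprj0 : ∀ j, pr (j + 1) 0 = ((1 - γ) * α 0) ^ (j + 1))
    (hprrec : ∀ j i, pr (j + 1) (i + 1) =
      (1 - γ) * α (i + 1) * pr j (i + 1) + γ * α i * pr j i + (1 - α i) * pr (j + 1) i)
    (d : ℝ) (hd : 0 < d)
    (hfd : ∀ l : ℕ, 1 - f l ≤ d / ((l : ℝ) + 2) ^ 2)
    (hpd : p * d * (1 - γ) / γ < 1)
    (q : ℝ) (hq : q = 1 / Real.log (γ / (p * d * (1 - γ))))
    (k : ℕ) (hk : 1 ≤ k)
    (s t : ℝ) (hs : 0 ≤ s) (ht : 0 ≤ t)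
    (hcond1 : t * γ * Real.log 2 / (1 - γ) ≤ (k : ℝ) - γ / (1 - γ))
    (hcond2 : s * q * Real.log 2 + t * q * Real.log 2 * (1 + 1 / (1 - γ)) ≤
      (k : ℝ) + q * (-(1 / (1 - γ)) + Real.log (1 / (1 - γ))))
    (T : ℕ) (hT1 : 1 ≤ T) (hT2 : (T : ℝ) ≤ (2 : ℝ) ^ t) :
    ∑ i ∈ Finset.range T, α i * pr (k - 1) i ≤ (2 : ℝ) ^ (-s) :=
  capacity_region_quadratic_learning_general p h γ hp hh hph hγ0 hγ1 f hf0 hf1 α hα pr hpr00 hpr0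
    hprj0 hprrec d hd hfd hpd q hq k hk s t ht hcond1 hcond2 T hT1 hT2
end

section
/- Let δ'_1, δ'_2, μ'_1, μ'_2, ξ'_1, ξ'_2 be reals and let W' : ℕ×ℕ → ℝ be a function such that for all integers k, T ≥ 0 and all reals s, t ≥ 0 with s·δ'_j + t·μ'_j ≤ k + ξ'_j for j = 1, 2 and T ≤ 2^t, one has W'(k,T) ≤ 2^{-s}. Let L* ≥ 1 be an integer, let x be a real with 0 < x < 1, set z = 1/ln(1/x), and let W : ℕ×ℕ → ℝ satisfy W(k,T) ≤ L*·x + W'(k - (L*+1), T) for all integers k ≥ L*+1 and T ≥ 0. Then for all reals s, t with 0 ≤ s ≤ 1/(z·ln 2) − ln(2L*)/ln 2 and t ≥ 0, and all integers k ≥ L*+1 and T with T ≤ 2^t: if s·δ'_j + t·μ'_j ≤ k + ξ'_j − δ'_j − (L*+1) for j = 1, 2, then W(k,T) ≤ 2^{-s}. -/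
/-- **Capacity region under moderately delayed learning (Corollary 2, second case).**
If `(δ', μ', ξ')` is a capacity region for the shifted game `W'` and
`W(k,T) ≤ L*·x + W'(k-(L*+1),T)` (delayed-learning decomposition with `k* = L*+1`),
then for all `0 ≤ s ≤ 1/(z ln 2) − ln(2L*)/ln 2` and `t ≥ 0` with
`s·δ'_j + t·μ'_j ≤ k + ξ'_j − δ'_j − (L*+1)` (j = 1,2) and `T ≤ 2^t`:
`W(k,T) ≤ 2^{-s}`. -/
theorem capacity_region_moderately_delayed_learning
    (δ'₁ δ'₂ μ'₁ μ'₂ ξ'₁ ξ'₂ : ℝ)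
    (W' : ℕ → ℕ → ℝ)
    (hW' : ∀ (k T : ℕ) (s t : ℝ), 0 ≤ s → 0 ≤ t →
      s * δ'₁ + t * μ'₁ ≤ (k : ℝ) + ξ'₁ →
      s * δ'₂ + t * μ'₂ ≤ (k : ℝ) + ξ'₂ →
      (T : ℝ) ≤ (2 : ℝ) ^ t → W' k T ≤ (2 : ℝ) ^ (-s))
    (Lstar : ℕ) (hLstar : 1 ≤ Lstar)
    (x : ℝ) (hx0 : 0 < x) (hx1 : x < 1)
    (z : ℝ) (hz : z = 1 / Real.log (1 / x))
    (W : ℕ → ℕ → ℝ)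
    (hW : ∀ (k T : ℕ), Lstar + 1 ≤ k →
      W k T ≤ (Lstar : ℝ) * x + W' (k - (Lstar + 1)) T)
    (s t : ℝ) (hs0 : 0 ≤ s)
    (hs1 : s ≤ 1 / (z * Real.log 2) - Real.log (2 * (Lstar : ℝ)) / Real.log 2)
    (ht : 0 ≤ t)
    (k T : ℕ) (hk : Lstar + 1 ≤ k) (hT : (T : ℝ) ≤ (2 : ℝ) ^ t)
    (hcond1 : s * δ'₁ + t * μ'₁ ≤ (k : ℝ) + ξ'₁ - δ'₁ - ((Lstar : ℝ) + 1))
    (hcond2 : s * δ'₂ + t * μ'₂ ≤ (k : ℝ) + ξ'₂ - δ'₂ - ((Lstar : ℝ) + 1)) :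
    W k T ≤ (2 : ℝ) ^ (-s) := by

  have hL0 : (0:ℝ) < Lstar := by exact_mod_cast hLstar
  have hlog2 : (0:ℝ) < Real.log 2 := Real.log_pos (by norm_num)
  have hlx : 0 < Real.log (1/x) := Real.log_pos ((one_lt_one_div hx0 hx1))
  have hzpos : 0 < z := by rw [hz]; positivity
  -- rewrite hs1
  have hs1' : s * Real.log 2 ≤ Real.log (1/x) - Real.log (2 * Lstar) := by
    have h1 : 1 / (z * Real.log 2) = Real.log (1/x) / Real.log 2 := by
      rw [hz]; field_simp
    rw [h1] at hs1
    have := (div_le_div_iff_of_pos_right hlog2).mpr hs1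
    nlinarith [mul_le_mul_of_nonneg_right hs1 hlog2.le,
      div_mul_cancel₀ (Real.log (1/x)) hlog2.ne',
      div_mul_cancel₀ (Real.log (2 * (Lstar:ℝ))) hlog2.ne']
  have hlog1x : Real.log (1/x) = -Real.log x := by
    rw [one_div, Real.log_inv]
  have hlog2L : Real.log (2 * (Lstar:ℝ)) = Real.log 2 + Real.log Lstar :=
    Real.log_mul (by norm_num) hL0.ne'
  -- L* x ≤ 2^{-(s+1)}
  have hkey : (Lstar:ℝ) * x ≤ (2:ℝ) ^ (-(s+1)) := by
    have hpos : (0:ℝ) < Lstar * x := by positivity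
    rw [Real.rpow_def_of_pos (by norm_num : (0:ℝ) < 2)]
    rw [← Real.exp_log hpos]
    apply Real.exp_le_exp.mpr
    rw [Real.log_mul hL0.ne' hx0.ne']
    rw [hlog1x, hlog2L] at hs1'
    nlinarith
  have hknat : Lstar + 1 ≤ k := hk
  have hcast : ((k - (Lstar + 1) : ℕ) : ℝ) = (k:ℝ) - ((Lstar:ℝ) + 1) := by
    push_cast [Nat.cast_sub hknat]; ring
  have hW'le : W' (k - (Lstar + 1)) T ≤ (2:ℝ) ^ (-(s+1)) := by
    apply hW' _ _ (s+1) t (by linarith) ht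
    · rw [hcast]; nlinarith
    · rw [hcast]; nlinarith
    · exact hT
  have hsum : (2:ℝ) ^ (-(s+1)) + (2:ℝ) ^ (-(s+1)) = (2:ℝ) ^ (-s) := by
    have : (2:ℝ) ^ (-s) = (2:ℝ) ^ (-(s+1)) * 2 ^ (1:ℝ) := by
      rw [← Real.rpow_add (by norm_num)]; ring_nf
    rw [this, Real.rpow_one]; ring
  calc W k T ≤ (Lstar:ℝ) * x + W' (k - (Lstar + 1)) T := hW k T hk
    _ ≤ (2:ℝ) ^ (-(s+1)) + (2:ℝ) ^ (-(s+1)) := add_le_add hkey hW'le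
    _ = (2:ℝ) ^ (-s) := hsum
end

section
/- Let B : ℝ → ℝ be differentiable, with derivative B' satisfying B'(x) ≥ 0 for all x ≥ 0 and B' nonincreasing on [0,∞) (as holds when B is twice differentiable with B'' ≤ 0). Then for every real y ≥ 0 and every natural number L: ∏_{l=0}^{L} (1 + y·B'(l)) ≤ exp( y·(B'(0) − B(0) + B(L)) ). -/
lemma sum_deriv_le (B : ℝ → ℝ) (hB : Differentiable ℝ B)
    (hB'anti : AntitoneOn (deriv B) (Set.Ici (0 : ℝ))) (L : ℕ) :
    ∑ l ∈ Finset.range (L + 1), deriv B l ≤ deriv B 0 - B 0 + B L := by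
  induction L with
  | zero => simp
  | succ n ih =>
    rw [Finset.sum_range_succ]
    have hstep : deriv B (n + 1 : ℕ) ≤ B (n + 1 : ℕ) - B n := by
      have hn : (0:ℝ) ≤ (n:ℝ) := by positivity
      have hle : (n:ℝ) ≤ (n:ℝ) + 1 := by linarith
      have hint : IntervalIntegrable (deriv B) MeasureTheory.volume n ((n:ℝ)+1) := by
        apply AntitoneOn.intervalIntegrable
        apply hB'anti.mono
        rw [Set.uIcc_of_le hle]
        intro x hx
        exact le_trans hn hx.1
      have hftc : ∫ x in (n:ℝ)..((n:ℝ)+1), deriv B x = B ((n:ℝ)+1) - B n :=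
        intervalIntegral.integral_deriv_eq_sub (fun x _ => hB x) hint
      have hmono : ∫ x in (n:ℝ)..((n:ℝ)+1), deriv B ((n:ℝ)+1)
          ≤ ∫ x in (n:ℝ)..((n:ℝ)+1), deriv B x := by
        apply intervalIntegral.integral_mono_on hle intervalIntegrable_const hint
        intro x hx
        exact hB'anti (le_trans hn hx.1) (by linarith [hx.2] : (0:ℝ) ≤ (n:ℝ)+1) hx.2
      rw [intervalIntegral.integral_const, hftc] at hmono
      push_cast
      simpa using hmono
    push_cast at *
    linarith

/-- **Lemma 1 of the paper.** If `B` is differentiable with nonnegative derivative on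
`[0,∞)` and nonincreasing derivative on `[0,∞)` (as when `B'' ≤ 0`), then for `y ≥ 0`
and every natural number `L`:
`∏_{l=0}^{L} (1 + y·B'(l)) ≤ exp(y·(B'(0) − B(0) + B(L)))`. -/
theorem product_one_add_deriv_le_exp
    (B : ℝ → ℝ) (hB : Differentiable ℝ B)
    (hB'nonneg : ∀ x : ℝ, 0 ≤ x → 0 ≤ deriv B x)
    (hB'anti : AntitoneOn (deriv B) (Set.Ici (0 : ℝ)))
    (y : ℝ) (hy : 0 ≤ y) (L : ℕ) :
    ∏ l ∈ Finset.range (L + 1), (1 + y * deriv B l) ≤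
      Real.exp (y * (deriv B 0 - B 0 + B L)) := by
  calc ∏ l ∈ Finset.range (L + 1), (1 + y * deriv B l)
      ≤ ∏ l ∈ Finset.range (L + 1), Real.exp (y * deriv B l) := by
        apply Finset.prod_le_prod
        · intro i _
          have := hB'nonneg i (by positivity)
          positivity
        · intro i _
          simpa [add_comm] using Real.add_one_le_exp (y * deriv B i)
    _ = Real.exp (∑ l ∈ Finset.range (L + 1), y * deriv B l) := by
        rw [Real.exp_sum]
    _ ≤ Real.exp (y * (deriv B 0 - B 0 + B L)) := by
        rw [Real.exp_le_exp, ← Finset.mul_sum]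
        exact mul_le_mul_of_nonneg_left (sum_deriv_le B hB hB'anti L) hy
end

section
/- Let n ≥ 1 and K ≥ 0 be integers and let r be a real with 0 ≤ r < 1. Then the sum over all tuples (g_0, …, g_{n-1}) ∈ ℕ^n with g_0 + ⋯ + g_{n-1} ≤ K of r^{g_0+⋯+g_{n-1}} is at least ( (1 − r^{⌊K/n⌋+1})/(1 − r) )^n. -/
/-- **Restricted geometric sum lower bound (central estimate in Theorem 5).**
For `0 ≤ r < 1` and integers `n ≥ 1`, `K ≥ 0`, the sum over all tuples
`(g_0,…,g_{n-1}) ∈ ℕ^n` with `g_0 + ⋯ + g_{n-1} ≤ K` of `r^{g_0+⋯+g_{n-1}}` is at least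
`((1 − r^{⌊K/n⌋+1})/(1 − r))^n`. -/
theorem restricted_geometric_sum_ge
    (n K : ℕ) (hn : 1 ≤ n) (r : ℝ) (hr0 : 0 ≤ r) (hr1 : r < 1) :
    ((1 - r ^ (K / n + 1)) / (1 - r)) ^ n ≤
      ∑ S ∈ Finset.range (K + 1), ∑ g ∈ Finset.Nat.antidiagonalTuple n S,
        r ^ (∑ i, g i) := by
  set m := K / n with hm
  have hr1' : r ≠ 1 := ne_of_lt hr1
  -- LHS = (geometric sum)^n
  have hgeom : (1 - r ^ (m + 1)) / (1 - r) = ∑ j ∈ Finset.range (m + 1), r ^ j := by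
    rw [geom_sum_eq hr1']
    rw [div_eq_div_iff (by linarith [sub_ne_zero.mpr hr1'.symm, hr1]) (by
      intro h; exact hr1' (by linarith [sub_eq_zero.mp h]))]
    ring
  rw [hgeom]
  -- expand the power as a sum over the box
  have hexp : (∑ j ∈ Finset.range (m + 1), r ^ j) ^ n
      = ∑ g ∈ Fintype.piFinset (fun _ : Fin n => Finset.range (m + 1)), r ^ (∑ i, g i) := by
    rw [← Fin.prod_const n, Finset.prod_univ_sum]
    exact Finset.sum_congr rfl fun g _ => Finset.prod_pow_eq_pow_sum _ _ _
  rw [hexp, Finset.sum_sigma']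
  -- map the box injectively into the sigma set
  set e : (Fin n → ℕ) → Σ _ : ℕ, (Fin n → ℕ) := fun g => ⟨∑ i, g i, g⟩ with he
  have hinj : Function.Injective e := by
    intro a b hab
    simpa [he] using congrArg Sigma.snd hab
  have himg :
      (Fintype.piFinset (fun _ : Fin n => Finset.range (m + 1))).image e ⊆
        (Finset.range (K + 1)).sigma (fun S => Finset.Nat.antidiagonalTuple n S) := by
    intro p hp
    obtain ⟨g, hg, rfl⟩ := Finset.mem_image.mp hp
    rw [Finset.mem_sigma]
    constructor
    · rw [Finset.mem_range, Nat.lt_succ_iff]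
      calc ∑ i, g i ≤ ∑ _i : Fin n, m := by
            refine Finset.sum_le_sum fun i _ => ?_
            exact Nat.lt_succ_iff.mp (Finset.mem_range.mp (Fintype.mem_piFinset.mp hg i))
        _ = n * m := by simp [Finset.sum_const, mul_comm]
        _ ≤ K := by rw [hm, mul_comm]; exact Nat.div_mul_le_self K n
    · exact Finset.Nat.mem_antidiagonalTuple.mpr rfl
  calc ∑ g ∈ Fintype.piFinset (fun _ : Fin n => Finset.range (m + 1)), r ^ (∑ i, g i)
      = ∑ p ∈ (Fintype.piFinset (fun _ : Fin n => Finset.range (m + 1))).image e,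
          r ^ (∑ i, p.2 i) := by
        rw [Finset.sum_image (fun a _ b _ h => hinj h)]
    _ ≤ ∑ p ∈ (Finset.range (K + 1)).sigma (fun S => Finset.Nat.antidiagonalTuple n S),
          r ^ (∑ i, p.2 i) :=
        Finset.sum_le_sum_of_subset_of_nonneg himg fun p _ _ => pow_nonneg hr0 _
end
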